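/- Let k be a field with characteristic ≠ 2, and consider the group bialgebra kZ₂ = k⟨t | t² = 1⟩ with Δ(t) = t ⊗ t, ε(t) = 1, viewed as a left bialgebroid over the base k. Define S : kZ₂ → kZ₂ by S(t) = −t (and S(1) = 1, extended k-linearly). Then (kZ₂, S) is a Hopf algebroid in the sense of Böhm–Szlachányi, but S does not satisfy Lu's antipode axiom: there is no section ξ of the canonical projection kZ₂ ⊗_k kZ₂ → kZ₂ ⊗_L kZ₂ such that multiplication ∘ (id ⊗ S) ∘ ξ ∘ γ_L equals s_L ∘ π_L (indeed t₍₁₎ S(t₍₂₎) = −1 ≠ 1 = η(ε(t))). -/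

import Mathlib

open scoped TensorProduct

namespace HopfAlgd

variable (A : Type*) [Ring A]

/-- `x ⊗ (y ⊗ z) ↦ (y * x) ⊗ z`. -/
noncomputable def m13 : A ⊗[ℤ] (A ⊗[ℤ] A) →ₗ[ℤ] A ⊗[ℤ] A :=
  (LinearMap.rTensor A (LinearMap.mul' ℤ A)) ∘ₗ
  (TensorProduct.assoc ℤ A A A).symm.toLinearMap ∘ₗ
  (LinearMap.lTensor A (TensorProduct.comm ℤ A A).toLinearMap) ∘ₗ
  (TensorProduct.assoc ℤ A A A).toLinearMap ∘ₗ
  (TensorProduct.comm ℤ A (A ⊗[ℤ] A)).toLinearMap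

/-- `x ⊗ (y ⊗ z) ↦ y ⊗ (z * x)`. -/
noncomputable def m23 : A ⊗[ℤ] (A ⊗[ℤ] A) →ₗ[ℤ] A ⊗[ℤ] A :=
  (LinearMap.lTensor A (LinearMap.mul' ℤ A)) ∘ₗ
  (TensorProduct.assoc ℤ A A A).toLinearMap ∘ₗ
  (TensorProduct.comm ℤ A (A ⊗[ℤ] A)).toLinearMap

/-- `(x ⊗ y) ⊗ z ↦ (x * z) ⊗ y`. -/
noncomputable def m13' : (A ⊗[ℤ] A) ⊗[ℤ] A →ₗ[ℤ] A ⊗[ℤ] A :=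
  (LinearMap.rTensor A (LinearMap.mul' ℤ A)) ∘ₗ
  (TensorProduct.assoc ℤ A A A).symm.toLinearMap ∘ₗ
  (LinearMap.lTensor A (TensorProduct.comm ℤ A A).toLinearMap) ∘ₗ
  (TensorProduct.assoc ℤ A A A).toLinearMap

/-- `(x ⊗ y) ⊗ z ↦ x ⊗ (y * z)`. -/
noncomputable def m23' : (A ⊗[ℤ] A) ⊗[ℤ] A →ₗ[ℤ] A ⊗[ℤ] A :=
  (LinearMap.lTensor A (LinearMap.mul' ℤ A)) ∘ₗ (TensorProduct.assoc ℤ A A A).toLinearMap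

variable {A}

/-- The subgroup of `A ⊗[ℤ] A` implementing the tensor product over a base ring, where the
relevant right action on the first factor is `f` and left action on the second factor is `g`. -/
def trel {L : Type*} (f g : L → A → A) : Submodule ℤ (A ⊗[ℤ] A) :=
  Submodule.span ℤ {x | ∃ (l : L) (a b : A), x = f l a ⊗ₜ[ℤ] b - a ⊗ₜ[ℤ] g l b}

/-- Analogue of `trel` for threefold tensor products. -/
def trel3 {L R : Type*} (f g : L → A → A) (f' g' : R → A → A) :
    Submodule ℤ (A ⊗[ℤ] (A ⊗[ℤ] A)) :=
  Submodule.span ℤ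
    ({x | ∃ (l : L) (a b c : A),
        x = f l a ⊗ₜ[ℤ] (b ⊗ₜ[ℤ] c) - a ⊗ₜ[ℤ] (g l b ⊗ₜ[ℤ] c)} ∪
     {x | ∃ (r : R) (a b c : A),
        x = a ⊗ₜ[ℤ] (f' r b ⊗ₜ[ℤ] c) - a ⊗ₜ[ℤ] (b ⊗ₜ[ℤ] g' r c)})

variable (A) in
/-- The data of a left bialgebroid: source and target maps, a chosen (Sweedler
representative of the) coproduct, and the counit. -/
structure LeftBialgebroidData (L : Type*) [Ring L] where
  s : L →+* A
  t : L →+ A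
  t_one : t 1 = 1
  t_mul : ∀ l l', t (l * l') = t l' * t l
  st_comm : ∀ l l', s l * t l' = t l' * s l
  Δ : A →+ A ⊗[ℤ] A
  π : A →+ L

variable {L R : Type*} [Ring L] [Ring R]

/-- The subgroup of `A ⊗[ℤ] A` by which one quotients to get `A_L ⊗_L _L A`. -/
def LeftBialgebroidData.rel (B : LeftBialgebroidData A L) : Submodule ℤ (A ⊗[ℤ] A) :=
  trel (fun l a => B.t l * a) (fun l b => B.s l * b)

def LeftBialgebroidData.rel3 (B : LeftBialgebroidData A L) :
    Submodule ℤ (A ⊗[ℤ] (A ⊗[ℤ] A)) :=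
  trel3 (fun l a => B.t l * a) (fun l b => B.s l * b)
        (fun l a => B.t l * a) (fun l b => B.s l * b)

variable (A) in
/-- A left bialgebroid (Takeuchi `×_L`-bialgebra), with the comonoid structure encoded via a
chosen additive lift `Δ` of the coproduct `γ_L`; all equalities in `A ⊗_L A` are expressed
as membership of differences in the relation subgroup `rel`. -/
structure LeftBialgebroid (L : Type*) [Ring L] extends LeftBialgebroidData A L where
  coassoc : ∀ a, (LinearMap.lTensor A Δ.toIntLinearMap) (Δ a)
      - @id (A ⊗[ℤ] (A ⊗[ℤ] A)) ((TensorProduct.assoc ℤ A A A) ((LinearMap.rTensor A Δ.toIntLinearMap) (Δ a)))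
      ∈ toLeftBialgebroidData.rel3
  cros : ∀ a l, (LinearMap.rTensor A (LinearMap.mulRight ℤ (t l))) (Δ a)
      - (LinearMap.lTensor A (LinearMap.mulRight ℤ (s l))) (Δ a) ∈ toLeftBialgebroidData.rel
  Δ_one : Δ 1 - (1 : A) ⊗ₜ[ℤ] (1 : A) ∈ toLeftBialgebroidData.rel
  Δ_mul : ∀ a b, Δ (a * b) - Δ a * Δ b ∈ toLeftBialgebroidData.rel
  counit_s : ∀ a, LinearMap.mul' ℤ A
      ((LinearMap.rTensor A (s.toAddMonoidHom.comp π).toIntLinearMap) (Δ a)) = a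
  counit_t : ∀ a, LinearMap.mul' ℤ A ((TensorProduct.comm ℤ A A)
      ((LinearMap.lTensor A (t.comp π).toIntLinearMap) (Δ a))) = a
  π_one : π 1 = 1
  π_s : ∀ a b, π (a * s (π b)) = π (a * b)
  π_t : ∀ a b, π (a * t (π b)) = π (a * b)
  π_bimod : ∀ l l' a, π (s l * (t l' * a)) = l * π a * l'

def LeftBialgebroid.rel (B : LeftBialgebroid A L) : Submodule ℤ (A ⊗[ℤ] A) :=
  B.toLeftBialgebroidData.rel

variable (A) in
/-- The data of a right bialgebroid. -/
structure RightBialgebroidData (R : Type*) [Ring R] where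
  s : R →+* A
  t : R →+ A
  t_one : t 1 = 1
  t_mul : ∀ r r', t (r * r') = t r' * t r
  st_comm : ∀ r r', s r * t r' = t r' * s r
  Δ : A →+ A ⊗[ℤ] A
  π : A →+ R

/-- The subgroup of `A ⊗[ℤ] A` by which one quotients to get `A^R ⊗_R ^R A`. -/
def RightBialgebroidData.rel (B : RightBialgebroidData A R) : Submodule ℤ (A ⊗[ℤ] A) :=
  trel (fun r a => a * B.s r) (fun r b => b * B.t r)

def RightBialgebroidData.rel3 (B : RightBialgebroidData A R) :
    Submodule ℤ (A ⊗[ℤ] (A ⊗[ℤ] A)) :=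
  trel3 (fun r a => a * B.s r) (fun r b => b * B.t r)
        (fun r a => a * B.s r) (fun r b => b * B.t r)

variable (A) in
/-- A right bialgebroid, with chosen additive lift `Δ` of the coproduct `γ_R`. -/
structure RightBialgebroid (R : Type*) [Ring R] extends RightBialgebroidData A R where
  coassoc : ∀ a, (LinearMap.lTensor A Δ.toIntLinearMap) (Δ a)
      - @id (A ⊗[ℤ] (A ⊗[ℤ] A)) ((TensorProduct.assoc ℤ A A A) ((LinearMap.rTensor A Δ.toIntLinearMap) (Δ a)))
      ∈ toRightBialgebroidData.rel3
  cros : ∀ a r, (LinearMap.rTensor A (LinearMap.mulLeft ℤ (s r))) (Δ a)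
      - (LinearMap.lTensor A (LinearMap.mulLeft ℤ (t r))) (Δ a) ∈ toRightBialgebroidData.rel
  Δ_one : Δ 1 - (1 : A) ⊗ₜ[ℤ] (1 : A) ∈ toRightBialgebroidData.rel
  Δ_mul : ∀ a b, Δ (a * b) - Δ a * Δ b ∈ toRightBialgebroidData.rel
  counit_s : ∀ a, LinearMap.mul' ℤ A
      ((LinearMap.lTensor A (s.toAddMonoidHom.comp π).toIntLinearMap) (Δ a)) = a
  counit_t : ∀ a, LinearMap.mul' ℤ A ((TensorProduct.comm ℤ A A)
      ((LinearMap.rTensor A (t.comp π).toIntLinearMap) (Δ a))) = a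
  π_one : π 1 = 1
  π_s : ∀ a b, π (s (π a) * b) = π (a * b)
  π_t : ∀ a b, π (t (π a) * b) = π (a * b)
  π_bimod : ∀ r r' a, π (a * s r' * t r) = r * π a * r'

def RightBialgebroid.rel (B : RightBialgebroid A R) : Submodule ℤ (A ⊗[ℤ] A) :=
  B.toRightBialgebroidData.rel

/-- The expression `a ↦ ∑ (f a₍₁₎)₍₁'₎ a₍₂₎ ⊗ (f a₍₁₎)₍₂'₎` (applied to `Δ a`). -/
noncomputable def axsExpr (Δ : A →+ A ⊗[ℤ] A) (f : A →+ A) :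
    A ⊗[ℤ] A →ₗ[ℤ] A ⊗[ℤ] A :=
  m13' A ∘ₗ LinearMap.rTensor A (Δ.toIntLinearMap ∘ₗ f.toIntLinearMap)

/-- The expression `a ↦ ∑ (f a₍₂₎)₍₁'₎ ⊗ (f a₍₂₎)₍₂'₎ a₍₁₎` (applied to `Δ a`). -/
noncomputable def axsiExpr (Δ : A →+ A ⊗[ℤ] A) (f : A →+ A) :
    A ⊗[ℤ] A →ₗ[ℤ] A ⊗[ℤ] A :=
  m23 A ∘ₗ LinearMap.lTensor A (Δ.toIntLinearMap ∘ₗ f.toIntLinearMap)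

/-- Definition 4.1 of Böhm–Szlachányi: a Hopf algebroid is a left bialgebroid together with a
ring anti-automorphism `S` such that `S ∘ t_L = s_L` and the two antipode axioms hold. -/
structure IsHopfAlgebroid (B : LeftBialgebroid A L) (S : A ≃+ A) : Prop where
  anti_mul : ∀ a b, S (a * b) = S b * S a
  one_map : S 1 = 1
  S_t : ∀ l, S (B.t l) = B.s l
  axs : ∀ a, axsExpr B.Δ S.toAddMonoidHom (B.Δ a) - (1 : A) ⊗ₜ[ℤ] S a ∈ B.rel
  axsi : ∀ a, axsiExpr B.Δ S.symm.toAddMonoidHom (B.Δ a) - S.symm a ⊗ₜ[ℤ] (1 : A) ∈ B.rel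

/-- The relation subgroup for `A_L ⊗_L (_L A^R) ⊗_R (^R A)`. -/
def mixedRel₁ (Bl : LeftBialgebroidData A L) (Br : RightBialgebroidData A R) :
    Submodule ℤ (A ⊗[ℤ] (A ⊗[ℤ] A)) :=
  trel3 (fun l a => Bl.t l * a) (fun l b => Bl.s l * b)
        (fun r b => b * Br.s r) (fun r c => c * Br.t r)

/-- The relation subgroup for `A^R ⊗_R (^R A_L) ⊗_L (_L A)`. -/
def mixedRel₂ (Bl : LeftBialgebroidData A L) (Br : RightBialgebroidData A R) :
    Submodule ℤ (A ⊗[ℤ] (A ⊗[ℤ] A)) :=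
  trel3 (fun r a => a * Br.s r) (fun r b => b * Br.t r)
        (fun l b => Bl.t l * b) (fun l c => Bl.s l * c)

variable (A L R) in
/-- A symmetrized Hopf algebroid in the sense of Proposition 4.2 (iii) of Böhm–Szlachányi:
compatible left and right bialgebroid structures over anti-isomorphic base rings, connected
by an additive bijection `S` satisfying the twisted bimodule and antipode conditions. -/
structure SymHopfAlgebroid : Type _ where
  left : LeftBialgebroid A L
  right : RightBialgebroid A R
  S : A ≃+ A
  base_op : Nonempty (L ≃+* Rᵐᵒᵖ)
  st_img : ∀ l, ∃ r, left.s l = right.t r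
  ts_img : ∀ r, ∃ l, right.t r = left.s l
  ts_img' : ∀ l, ∃ r, left.t l = right.s r
  st_img' : ∀ r, ∃ l, right.s r = left.t l
  mixed₁ : ∀ a, @id (A ⊗[ℤ] (A ⊗[ℤ] A)) ((TensorProduct.assoc ℤ A A A)
        ((LinearMap.rTensor A left.Δ.toIntLinearMap) (right.Δ a)))
      - (LinearMap.lTensor A right.Δ.toIntLinearMap) (left.Δ a)
      ∈ mixedRel₁ left.toLeftBialgebroidData right.toRightBialgebroidData
  mixed₂ : ∀ a, @id (A ⊗[ℤ] (A ⊗[ℤ] A)) ((TensorProduct.assoc ℤ A A A)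
        ((LinearMap.rTensor A right.Δ.toIntLinearMap) (left.Δ a)))
      - (LinearMap.lTensor A left.Δ.toIntLinearMap) (right.Δ a)
      ∈ mixedRel₂ left.toLeftBialgebroidData right.toRightBialgebroidData
  S_twist_L : ∀ l l' a, S (left.t l * a * left.t l') = left.s l' * S a * left.s l
  S_twist_R : ∀ r r' a, S (right.t r' * a * right.t r) = right.s r * S a * right.s r'
  antipode_L : ∀ a, LinearMap.mul' ℤ A
      ((LinearMap.rTensor A S.toAddMonoidHom.toIntLinearMap) (left.Δ a))
      = right.s (right.π a)
  antipode_R : ∀ a, LinearMap.mul' ℤ A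
      ((LinearMap.lTensor A S.toAddMonoidHom.toIntLinearMap) (right.Δ a))
      = left.s (left.π a)

namespace SymHopfAlgebroid

variable (H : SymHopfAlgebroid A L R)

/-- Left integrals: invariants of the left regular module. -/
def IsLeftIntegral (ℓ : A) : Prop := ∀ a, a * ℓ = H.left.s (H.left.π a) * ℓ

/-- Right integrals: invariants of the right regular module. -/
def IsRightIntegral (x : A) : Prop := ∀ a, x * a = x * H.right.s (H.right.π a)

/-- Membership in the dual `A^* = Hom(A^R, R^R)`. -/
def InAstarR (φ : A →+ R) : Prop := ∀ a r, φ (a * H.right.s r) = φ a * r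

/-- Membership in the dual `^*A = Hom(^R A, ^R R)`. -/
def InstarAR (φ : A →+ R) : Prop := ∀ a r, φ (a * H.right.t r) = r * φ a

/-- Membership in the dual `A_* = Hom(A_L, L_L)`. -/
def InAstarL (φ : A →+ L) : Prop := ∀ a l, φ (H.left.t l * a) = φ a * l

/-- Membership in the dual `_*A = Hom(_L A, _L L)`. -/
def InstarAL (φ : A →+ L) : Prop := ∀ a l, φ (H.left.s l * a) = l * φ a

/-- `φ ⇀ a = a⁽²⁾ t_R (φ a⁽¹⁾)`. -/
noncomputable def rharp (φ : A →+ R) (a : A) : A :=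
  LinearMap.mul' ℤ A ((TensorProduct.comm ℤ A A)
    ((LinearMap.rTensor A (H.right.t.comp φ).toIntLinearMap) (H.right.Δ a)))

/-- `φ ⇁ a = a⁽¹⁾ s_R (φ a⁽²⁾)`. -/
noncomputable def lharp (φ : A →+ R) (a : A) : A :=
  LinearMap.mul' ℤ A
    ((LinearMap.lTensor A (H.right.s.toAddMonoidHom.comp φ).toIntLinearMap) (H.right.Δ a))

/-- `a ↼ φ = s_L (φ a₍₁₎) a₍₂₎`. -/
noncomputable def rharpL (φ : A →+ L) (a : A) : A :=
  LinearMap.mul' ℤ A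
    ((LinearMap.rTensor A (H.left.s.toAddMonoidHom.comp φ).toIntLinearMap) (H.left.Δ a))

/-- `a ↽ φ = t_L (φ a₍₂₎) a₍₁₎`. -/
noncomputable def lharpL (φ : A →+ L) (a : A) : A :=
  LinearMap.mul' ℤ A ((TensorProduct.comm ℤ A A)
    ((LinearMap.lTensor A (H.left.t.comp φ).toIntLinearMap) (H.left.Δ a)))

/-- Non-degeneracy of a left integral: the maps `ℓ_R : A^* → A` and `_Rℓ : ^*A → A`
are bijective. -/
def IsNonDegLeftIntegral (ℓ : A) : Prop :=
  H.IsLeftIntegral ℓ ∧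
  Function.Bijective (fun φ : {φ : A →+ R // H.InAstarR φ} => H.rharp φ.1 ℓ) ∧
  Function.Bijective (fun φ : {φ : A →+ R // H.InstarAR φ} => H.lharp φ.1 ℓ)

end SymHopfAlgebroid

end HopfAlgd

/-- The group algebra `kZ₂`, modelled as `k[X]/(X² - 1)`. -/
noncomputable abbrev kZtwo (k : Type*) [Field k] : Type _ :=
  AdjoinRoot ((Polynomial.X) ^ 2 - 1 : Polynomial k)

/-! `kZ₂ = k ⊕ k t` with `t² = 1`, and every axiom is additive in `a`, so it suffices to check it
on `a = x` and `a = x t` for `x ∈ k`, where `Δ(x t) = x t ⊗ t` and `S(x t) = -x t`; there each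
check is an identity or a single defining relation `x a ⊗ b ≡ a ⊗ x b` of `⊗_k`.

For Lu's axiom: since `S` is `k`-linear and `kZ₂` is commutative, `a ⊗ b ↦ a S(b)` kills these
relations, so its value on `ξ(Δ t)` does not depend on the section `ξ` and equals
`t S(t) = -1`, while `s_L(π_L(t)) = 1`. -/

open Polynomial AdjoinRoot
open scoped TensorProduct

namespace HopfAlgd

variable {A : Type*} [Ring A]

/- `LinearMap.comp_apply` and `TensorProduct.assoc_tmul` do not fire on these expressions: the
`Module ℤ (A ⊗[ℤ] A)` coming from `toIntLinearMap` and the one `TensorProduct.assoc` expects agree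
only up to unfolding. Hence the `change`s below and the `erw` in `lTensor_comul_comul`. -/
theorem axsExpr_tmul_of_eq {Δ : A →+ A ⊗[ℤ] A} {f : A →+ A} {a b u v : A}
    (h : Δ (f a) = u ⊗ₜ v) : axsExpr Δ f (a ⊗ₜ b) = (u * b) ⊗ₜ v := by
  change LinearMap.rTensor A (LinearMap.mul' ℤ A) ((TensorProduct.assoc ℤ A A A).symm
    (LinearMap.lTensor A (TensorProduct.comm ℤ A A).toLinearMap
      (TensorProduct.assoc ℤ A A A (Δ (f a) ⊗ₜ b)))) = _
  rw [h]
  simp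

theorem axsiExpr_tmul_of_eq {Δ : A →+ A ⊗[ℤ] A} {f : A →+ A} {a b u v : A}
    (h : Δ (f b) = u ⊗ₜ v) : axsiExpr Δ f (a ⊗ₜ b) = u ⊗ₜ (v * a) := by
  change LinearMap.lTensor A (LinearMap.mul' ℤ A) (TensorProduct.assoc ℤ A A A
    (TensorProduct.comm ℤ A (A ⊗[ℤ] A) (a ⊗ₜ Δ (f b)))) = _
  rw [h, TensorProduct.comm_tmul]
  change LinearMap.lTensor A (LinearMap.mul' ℤ A) (TensorProduct.assoc ℤ A A A ((u ⊗ₜ v) ⊗ₜ a)) = _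
  simp

theorem map_eq_of_sub_mem_trel {L M : Type*} [AddCommGroup M] {f g : L → A → A}
    (F : A ⊗[ℤ] A →+ M) (h : ∀ l a b, F (f l a ⊗ₜ b) = F (a ⊗ₜ g l b)) {x y : A ⊗[ℤ] A}
    (hxy : x - y ∈ trel f g) : F x = F y := by
  have hker : trel f g ≤ LinearMap.ker F.toIntLinearMap :=
    Submodule.span_le.mpr <| by
      rintro _ ⟨l, a, b, rfl⟩
      simp [h]
  rw [← sub_eq_zero, ← map_sub]
  exact hker hxy

end HopfAlgd

abbrev GroupAlgebraZ2 (k : Type*) [CommRing k] : Type _ :=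
  AdjoinRoot (X ^ 2 - 1 : k[X])

namespace GroupAlgebraZ2

variable {k : Type*} [CommRing k]

noncomputable abbrev gen : GroupAlgebraZ2 k := AdjoinRoot.root _

@[simp] theorem gen_mul_self : (gen : GroupAlgebraZ2 k) * gen = 1 := by
  have h := AdjoinRoot.eval₂_root (X ^ 2 - 1 : k[X])
  simpa [sq, sub_eq_zero] using h

theorem exists_eq_of_add_of_mul_gen (a : GroupAlgebraZ2 k) :
    ∃ x y : k, a = of _ x + of _ y * gen := by
  have ha : a ∈ Algebra.adjoin k {gen} := by
    rw [AdjoinRoot.adjoinRoot_eq_top]; trivial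
  induction ha using Algebra.adjoin_induction with
  | mem _ h => exact ⟨0, 1, by simp [Set.mem_singleton_iff.mp h]⟩
  | algebraMap x => exact ⟨x, 0, by simp⟩
  | add a b _ _ ha hb =>
    obtain ⟨x, y, rfl⟩ := ha
    obtain ⟨x', y', rfl⟩ := hb
    exact ⟨x + x', y + y', by simp only [map_add]; ring⟩
  | mul a b _ _ ha hb =>
    obtain ⟨x, y, rfl⟩ := ha
    obtain ⟨x', y', rfl⟩ := hb
    refine ⟨x * x' + y * y', x * y' + y * x', ?_⟩
    simp only [map_add, map_mul]
    linear_combination (of _ y * of _ y') * gen_mul_self (k := k)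

theorem induction_on {P : GroupAlgebraZ2 k → Prop} (a : GroupAlgebraZ2 k)
    (scalar : ∀ x, P (of _ x)) (scalar_mul_gen : ∀ x, P (of _ x * gen))
    (add : ∀ a b, P a → P b → P (a + b)) : P a := by
  obtain ⟨x, y, rfl⟩ := exists_eq_of_add_of_mul_gen a
  exact add _ _ (scalar x) (scalar_mul_gen y)

noncomputable def counit : GroupAlgebraZ2 k →ₐ[k] k :=
  liftAlgHom _ (Algebra.ofId k k) 1 (by simp)

noncomputable def comul : GroupAlgebraZ2 k →ₐ[k] GroupAlgebraZ2 k ⊗[ℤ] GroupAlgebraZ2 k :=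
  liftAlgHom _ (Algebra.ofId k _) (gen ⊗ₜ gen) (by
    simp [sq, Algebra.TensorProduct.tmul_mul_tmul, Algebra.TensorProduct.one_def])

noncomputable def antipodeHom : GroupAlgebraZ2 k →ₐ[k] GroupAlgebraZ2 k :=
  liftAlgHom _ (Algebra.ofId k _) (-gen) (by simp [sq])

@[simp] theorem counit_gen : counit (gen : GroupAlgebraZ2 k) = 1 :=
  liftAlgHom_root _ _ _ _

@[simp] theorem counit_of (x : k) : counit (of (X ^ 2 - 1 : k[X]) x) = x :=
  counit.commutes x

@[simp] theorem comul_gen : comul (gen : GroupAlgebraZ2 k) = gen ⊗ₜ gen :=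
  liftAlgHom_root _ _ _ _

@[simp] theorem comul_of (x : k) : comul (of (X ^ 2 - 1 : k[X]) x) = of _ x ⊗ₜ 1 :=
  comul.commutes x

theorem comul_of_mul_gen (x : k) :
    comul (of (X ^ 2 - 1 : k[X]) x * gen) = (of _ x * gen) ⊗ₜ gen := by
  simp

@[simp] theorem antipodeHom_gen : antipodeHom (gen : GroupAlgebraZ2 k) = -gen :=
  liftAlgHom_root _ _ _ _

@[simp] theorem antipodeHom_of (x : k) : antipodeHom (of (X ^ 2 - 1 : k[X]) x) = of _ x :=
  antipodeHom.commutes x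

theorem antipodeHom_comp_antipodeHom :
    (antipodeHom : GroupAlgebraZ2 k →ₐ[k] _).comp antipodeHom = AlgHom.id k _ :=
  AdjoinRoot.algHom_ext (by simp)

noncomputable def antipode : GroupAlgebraZ2 k ≃ₐ[k] GroupAlgebraZ2 k :=
  AlgEquiv.ofAlgHom antipodeHom antipodeHom antipodeHom_comp_antipodeHom
    antipodeHom_comp_antipodeHom

@[simp] theorem antipode_apply (a : GroupAlgebraZ2 k) : antipode a = antipodeHom a := rfl

@[simp] theorem antipode_symm_apply (a : GroupAlgebraZ2 k) : antipode.symm a = antipodeHom a :=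
  rfl

theorem lTensor_comul_comul (a : GroupAlgebraZ2 k) :
    LinearMap.lTensor _ (comul (k := k)).toRingHom.toAddMonoidHom.toIntLinearMap (comul a) =
      TensorProduct.assoc ℤ _ _ _
        (LinearMap.rTensor _ (comul (k := k)).toRingHom.toAddMonoidHom.toIntLinearMap (comul a)) := by
  induction a using induction_on with
  | scalar x => simp; erw [TensorProduct.assoc_tmul]; rfl
  | scalar_mul_gen x => simp; erw [TensorProduct.assoc_tmul]; rfl
  | add a b ha hb => simp only [map_add, ha, hb]; erw [map_add]; rfl

open HopfAlgd in
noncomputable def bialgebroid : LeftBialgebroid (GroupAlgebraZ2 k) k where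
  s := algebraMap k _
  t := (algebraMap k _).toAddMonoidHom
  t_one := (algebraMap k _).map_one
  t_mul l l' := by simp [mul_comm]
  st_comm _ _ := mul_comm _ _
  Δ := (comul (k := k)).toRingHom.toAddMonoidHom
  π := (counit (k := k)).toRingHom.toAddMonoidHom
  coassoc a := by
    convert Submodule.zero_mem _ using 1
    exact sub_eq_zero.mpr (lTensor_comul_comul a)
  cros a l := by
    induction a using induction_on with
    | scalar x => exact Submodule.subset_span ⟨l, of _ x, 1, by simp [mul_comm]⟩
    | scalar_mul_gen x => exact Submodule.subset_span ⟨l, of _ x * gen, gen, by simp [mul_comm]⟩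
    | add a b ha hb => simpa only [map_add, add_sub_add_comm] using add_mem ha hb
  Δ_one := by simp [Algebra.TensorProduct.one_def]
  Δ_mul a b := by simp
  counit_s a := by
    induction a using induction_on with
    | scalar x => simp
    | scalar_mul_gen x => simp
    | add a b ha hb => simp_all
  counit_t a := by
    induction a using induction_on with
    | scalar x => simp
    | scalar_mul_gen x => simp [mul_comm]
    | add a b ha hb => simp_all
  π_one := counit.map_one
  π_s a b := by simp
  π_t a b := by simp
  π_bimod l l' a := by simp; ring

@[simp] theorem bialgebroid_s (x : k) : bialgebroid.s x = of (X ^ 2 - 1 : k[X]) x := rfl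

@[simp] theorem bialgebroid_t (x : k) : bialgebroid.t x = of (X ^ 2 - 1 : k[X]) x := rfl

@[simp] theorem bialgebroid_π (a : GroupAlgebraZ2 k) : bialgebroid.π a = counit a := rfl

@[simp] theorem bialgebroid_Δ (a : GroupAlgebraZ2 k) : bialgebroid.Δ a = comul a := rfl

open HopfAlgd in
theorem isHopfAlgebroid : IsHopfAlgebroid (bialgebroid (k := k)) antipode.toAddEquiv where
  anti_mul a b := by simp [mul_comm]
  one_map := antipodeHom.map_one
  S_t l := antipodeHom_of l
  axs a := by
    induction a using induction_on with
    | scalar x =>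
      rw [bialgebroid_Δ, comul_of, axsExpr_tmul_of_eq (u := of _ x) (v := 1) (by simp)]
      exact Submodule.subset_span ⟨x, 1, 1, by simp⟩
    | scalar_mul_gen x =>
      rw [bialgebroid_Δ, comul_of_mul_gen,
        axsExpr_tmul_of_eq (u := -(of _ x * gen)) (v := gen) (by simp [TensorProduct.neg_tmul])]
      exact (Submodule.neg_mem_iff _).mp (Submodule.subset_span
        ⟨x, 1, gen, by simp [mul_assoc, TensorProduct.neg_tmul, TensorProduct.tmul_neg]; abel⟩)
    | add a b ha hb =>
      simpa only [map_add, TensorProduct.tmul_add, add_sub_add_comm] using add_mem ha hb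
  axsi a := by
    induction a using induction_on with
    | scalar x =>
      rw [bialgebroid_Δ, comul_of,
        axsiExpr_tmul_of_eq (u := 1) (v := 1) (by simp [Algebra.TensorProduct.one_def])]
      exact (Submodule.neg_mem_iff _).mp (Submodule.subset_span ⟨x, 1, 1, by simp⟩)
    | scalar_mul_gen x =>
      rw [bialgebroid_Δ, comul_of_mul_gen,
        axsiExpr_tmul_of_eq (u := -gen) (v := gen) (by simp [TensorProduct.neg_tmul])]
      exact Submodule.subset_span
        ⟨x, gen, 1, by simp [mul_left_comm gen, TensorProduct.neg_tmul]; abel⟩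
    | add a b ha hb =>
      simpa only [map_add, TensorProduct.add_tmul, add_sub_add_comm] using add_mem ha hb

theorem not_exists_lu_section (h2 : (2 : k) ≠ 0) :
    ¬ ∃ ξ : GroupAlgebraZ2 k ⊗[ℤ] GroupAlgebraZ2 k →+ GroupAlgebraZ2 k ⊗[ℤ] GroupAlgebraZ2 k,
      (∀ x, ξ x - x ∈ bialgebroid.rel) ∧
      ∀ a, LinearMap.mul' ℤ (GroupAlgebraZ2 k)
          ((LinearMap.lTensor (GroupAlgebraZ2 k) antipode.toAddEquiv.toAddMonoidHom.toIntLinearMap)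
            (ξ (bialgebroid.Δ a))) = bialgebroid.s (bialgebroid.π a) := by
  rintro ⟨ξ, hξ, hlu⟩
  set F := (LinearMap.mul' ℤ (GroupAlgebraZ2 k)).toAddMonoidHom.comp
    (LinearMap.lTensor (GroupAlgebraZ2 k)
      (antipode (k := k)).toAddEquiv.toAddMonoidHom.toIntLinearMap).toAddMonoidHom
  have hξF : F (ξ (gen ⊗ₜ gen)) = F (gen ⊗ₜ gen) :=
    HopfAlgd.map_eq_of_sub_mem_trel F (fun l a b => by simp [F]; ring) (hξ _)
  have h_one : F (ξ (gen ⊗ₜ gen)) = 1 := by simpa [F] using hlu gen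
  have h_neg_one : F (gen ⊗ₜ gen) = -1 := by simp [F]
  have h_neg_one_eq_one : (-1 : GroupAlgebraZ2 k) = 1 := by rw [← h_neg_one, ← hξF, h_one]
  have h_counit := congrArg counit h_neg_one_eq_one
  simp only [map_neg, map_one] at h_counit
  exact h2 (by linear_combination -h_counit)

end GroupAlgebraZ2

open HopfAlgd in
/-- Over a field `k` of characteristic `≠ 2`, the group bialgebra
`kZ₂ = k⟨t | t² = 1⟩` (viewed as a left bialgebroid over `k`) together with `S(t) = -t`
is a Hopf algebroid in the sense of Böhm–Szlachányi, but there is no Lu-type section `ξ`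
of the canonical projection with `m ∘ (id ⊗ S) ∘ ξ ∘ γ_L = s_L ∘ π_L`. -/
theorem statement8 (k : Type*) [Field k] (hchar : ringChar k ≠ 2) :
    ∃ (B : LeftBialgebroid (kZtwo k) k) (S : kZtwo k ≃+ kZtwo k),
      IsHopfAlgebroid B S ∧
      B.s = algebraMap k (kZtwo k) ∧
      (∀ c : k, B.t c = algebraMap k (kZtwo k) c) ∧
      (B.Δ (AdjoinRoot.root _)
        - (AdjoinRoot.root _) ⊗ₜ[ℤ] (AdjoinRoot.root _) ∈ B.rel) ∧
      B.π (AdjoinRoot.root _) = 1 ∧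
      S (AdjoinRoot.root _) = - AdjoinRoot.root _ ∧
      -- failure of the Lu axiom: no section of the canonical projection implements the
      -- antipode axiom `m ∘ (id ⊗ S) ∘ ξ ∘ γ_L = s_L ∘ π_L`
      ¬ ∃ ξ : kZtwo k ⊗[ℤ] kZtwo k →+ kZtwo k ⊗[ℤ] kZtwo k,
          (∀ x, ξ x - x ∈ B.rel) ∧ (∀ y ∈ B.rel, ξ y = 0) ∧
          (∀ a, LinearMap.mul' ℤ (kZtwo k)
              ((LinearMap.lTensor (kZtwo k) S.toAddMonoidHom.toIntLinearMap) (ξ (B.Δ a)))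
            = B.s (B.π a)) := by
  refine ⟨GroupAlgebraZ2.bialgebroid, GroupAlgebraZ2.antipode.toAddEquiv,
    GroupAlgebraZ2.isHopfAlgebroid, rfl, fun _ => rfl, ?_, GroupAlgebraZ2.counit_gen,
    GroupAlgebraZ2.antipodeHom_gen, ?_⟩
  · simp
  · rintro ⟨ξ, hξ, -, hlu⟩
    exact GroupAlgebraZ2.not_exists_lu_section (Ring.two_ne_zero hchar) ⟨ξ, hξ, hlu⟩
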